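/- arXiv:2505.14998 — 6 statements merged into one kernel-verified Lean document; each statement's English description precedes it below -/
import Mathlib

section
/- Let X be a type of variables, let n be a positive integer, and let φₙ : ℤ[X] → (ℤ/nℤ)[X] denote the coefficient-reduction ring homomorphism. Let S be a set of polynomials in ℤ[X] and let d ∈ ℤ[X] be such that φₙ(d) lies in the ideal of (ℤ/nℤ)[X] generated by φₙ(S). Then there is no assignment v : X → ℤ satisfying both (1) n ∣ eval v s for all s ∈ S, and (2) ¬(n ∣ eval v d) (soundness of the UnsatDiseq rule). -/
/-- Soundness of the `UnsatDiseq` rule: if `φₙ d` is in the ideal of `(ZMod n)[X]`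
generated by `φₙ '' S`, then no assignment simultaneously makes every `s ∈ S`
divisible by `n` while keeping `d` not divisible by `n`. -/
theorem stmt_6 {X : Type*} (n : ℕ) (hn : 0 < n)
    (S : Set (MvPolynomial X ℤ)) (d : MvPolynomial X ℤ)
    (hmem : MvPolynomial.map (Int.castRingHom (ZMod n)) d ∈
      Ideal.span ((MvPolynomial.map (Int.castRingHom (ZMod n))) '' S)) :
    ¬ ∃ v : X → ℤ, (∀ s ∈ S, (n : ℤ) ∣ MvPolynomial.eval v s) ∧
      ¬ (n : ℤ) ∣ MvPolynomial.eval v d := by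
  haveI : NeZero n := ⟨hn.ne'⟩
  rintro ⟨v, hS, hd⟩
  apply hd
  rw [← ZMod.intCast_zmod_eq_zero_iff_dvd]
  have key : ∀ p : MvPolynomial X ℤ,
      MvPolynomial.eval (fun x => ((v x : ZMod n)))
        (MvPolynomial.map (Int.castRingHom (ZMod n)) p)
        = ((MvPolynomial.eval v p : ℤ) : ZMod n) := by
    intro p
    rw [MvPolynomial.eval_map]
    exact (MvPolynomial.eval₂_comp_left (Int.castRingHom (ZMod n)) (RingHom.id ℤ) v p).symm.trans (by simp [Function.comp])
  rw [← key]
  refine Submodule.span_induction ?_ ?_ ?_ ?_ hmem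
  · rintro q ⟨s, hs, rfl⟩
    rw [key]
    exact (ZMod.intCast_zmod_eq_zero_iff_dvd _ _).2 (hS s hs)
  · simp
  · intro a b _ _ ha hb; simp [ha, hb]
  · intro a b _ hb; simp [smul_eq_mul, hb]
end

section
/- Let X be a type of variables, let n be a positive integer, and let φₙ : ℤ[X] → (ℤ/nℤ)[X] denote the coefficient-reduction ring homomorphism. Let S be a set of polynomials in ℤ[X] and let e ∈ ℤ[X] be such that φₙ(e) lies in the ideal of (ℤ/nℤ)[X] generated by φₙ(S). Then every assignment v : X → ℤ satisfying (1) n ∣ eval v s for all s ∈ S, and (2) 1 − 2n ≤ eval v e ≤ 2n − 1, satisfies eval v e = −n, or eval v e = 0, or eval v e = n (soundness of the RngLift branching rule). -/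
/-- Soundness of the `RngLift` branching rule: if `φₙ e` is in the ideal of
`(ℤ/nℤ)[X]` generated by `φₙ '' S`, then every assignment making every `s ∈ S`
divisible by `n` and keeping `eval v e` within `[1 − 2n, 2n − 1]` satisfies
`eval v e = -n`, `eval v e = 0`, or `eval v e = n`. -/
theorem stmt_8 {X : Type*} (n : ℕ) (hn : 0 < n)
    (S : Set (MvPolynomial X ℤ)) (e : MvPolynomial X ℤ)
    (hmem : MvPolynomial.map (Int.castRingHom (ZMod n)) e ∈
      Ideal.span ((MvPolynomial.map (Int.castRingHom (ZMod n))) '' S)) :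
    ∀ v : X → ℤ, (∀ s ∈ S, (n : ℤ) ∣ MvPolynomial.eval v s) →
      1 - 2 * n ≤ MvPolynomial.eval v e → MvPolynomial.eval v e ≤ 2 * n - 1 →
      (MvPolynomial.eval v e = -n ∨ MvPolynomial.eval v e = 0 ∨
        MvPolynomial.eval v e = n) := by
  intro v hS hlo hhi
  have hdvd : (n : ℤ) ∣ MvPolynomial.eval v e := by
    rw [← ZMod.intCast_zmod_eq_zero_iff_dvd]
    -- ψ : evaluation at v reduced mod n
    set ψ : MvPolynomial X (ZMod n) →+* ZMod n :=
      MvPolynomial.eval (fun x => ((v x : ℤ) : ZMod n)) with hψ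
    have key : ∀ p : MvPolynomial X ℤ,
        ψ (MvPolynomial.map (Int.castRingHom (ZMod n)) p)
          = ((MvPolynomial.eval v p : ℤ) : ZMod n) := by
      intro p
      have := MvPolynomial.eval₂_comp_left (Int.castRingHom (ZMod n))
        (RingHom.id ℤ) v p
      rw [hψ, MvPolynomial.eval_map]
      simp only [MvPolynomial.eval₂_id, RingHom.comp_id] at this
      exact this.symm
    have h1 : ψ (MvPolynomial.map (Int.castRingHom (ZMod n)) e) ∈
        Ideal.map ψ (Ideal.span ((MvPolynomial.map (Int.castRingHom (ZMod n))) '' S)) :=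
      Ideal.mem_map_of_mem ψ hmem
    rw [Ideal.map_span] at h1
    have h2 : (ψ '' ((MvPolynomial.map (Int.castRingHom (ZMod n))) '' S)) ⊆ {0} := by
      rintro _ ⟨_, ⟨s, hs, rfl⟩, rfl⟩
      have := hS s hs
      simp [key, (ZMod.intCast_zmod_eq_zero_iff_dvd _ _).2 this]
    have h3 : Ideal.span (ψ '' ((MvPolynomial.map (Int.castRingHom (ZMod n))) '' S)) ≤ ⊥ := by
      rw [← Ideal.span_singleton_eq_bot.mpr rfl]
      exact Ideal.span_mono h2
    have := h3 h1
    rw [key] at this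
    simpa using this
  obtain ⟨k, hk⟩ := hdvd
  have hn' : (1:ℤ) ≤ n := by exact_mod_cast hn
  rw [hk] at hlo hhi
  have habs : (n:ℤ) * |k| ≤ 2 * n - 1 := by
    rcases abs_cases k with ⟨h1, _⟩ | ⟨h1, _⟩ <;> rw [h1] <;> nlinarith
  have hk2 : |k| ≤ 1 := by nlinarith [abs_nonneg k]
  rw [abs_le] at hk2
  have : k = -1 ∨ k = 0 ∨ k = 1 := by omega
  rcases this with h | h | h <;> simp [hk, h]
end

section
/- Let X be a type of variables, let n be a positive integer, and let φₙ : ℤ[X] → (ℤ/nℤ)[X] denote the coefficient-reduction ring homomorphism. Let R be a set of polynomials in ℤ[X], let e ∈ ℤ[X] with φₙ(e) in the ideal of (ℤ/nℤ)[X] generated by φₙ(R), and let C be a set of assignments v : X → ℤ such that every v ∈ C satisfies n ∣ eval v r for all r ∈ R and 1 − n ≤ eval v e ≤ n − 1. Then every v ∈ C satisfies eval v e = 0 (soundness of the LiftEq rule: an equation implied modulo n whose value range lies strictly within (−n, n) holds over the integers). -/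
/-- Soundness of the `LiftEq` rule: if `φₙ e` is in the ideal of `(ℤ/nℤ)[X]` generated
by `φₙ '' R`, and every model `v ∈ C` makes every `r ∈ R` divisible by `n` and keeps
`eval v e` within `[1 − n, n − 1]`, then every model satisfies `eval v e = 0`. -/
theorem stmt_9 {X : Type*} (n : ℕ) (hn : 0 < n)
    (R : Set (MvPolynomial X ℤ)) (e : MvPolynomial X ℤ)
    (C : Set (X → ℤ))
    (hmem : MvPolynomial.map (Int.castRingHom (ZMod n)) e ∈
      Ideal.span ((MvPolynomial.map (Int.castRingHom (ZMod n))) '' R))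
    (hdvd : ∀ v ∈ C, ∀ r ∈ R, (n : ℤ) ∣ MvPolynomial.eval v r)
    (hrange : ∀ v ∈ C, 1 - (n : ℤ) ≤ MvPolynomial.eval v e ∧
      MvPolynomial.eval v e ≤ (n : ℤ) - 1) :
    ∀ v ∈ C, MvPolynomial.eval v e = 0 := by
  intro v hv
  set ψ : MvPolynomial X (ZMod n) →+* ZMod n :=
    MvPolynomial.eval₂Hom (RingHom.id (ZMod n)) (fun x => ((v x : ℤ) : ZMod n)) with hψ
  have key : ∀ p : MvPolynomial X ℤ,
      ψ (MvPolynomial.map (Int.castRingHom (ZMod n)) p)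
        = ((MvPolynomial.eval v p : ℤ) : ZMod n) := by
    intro p
    rw [hψ]
    simp only [MvPolynomial.eval₂Hom_map_hom, MvPolynomial.eval]
    rw [show ((MvPolynomial.eval₂Hom (RingHom.id ℤ) v p : ℤ) : ZMod n)
        = (Int.castRingHom (ZMod n)) (MvPolynomial.eval₂Hom (RingHom.id ℤ) v p) from rfl,
      MvPolynomial.map_eval₂Hom]
    rfl
  have hzero : ψ (MvPolynomial.map (Int.castRingHom (ZMod n)) e) = 0 := by
    refine Submodule.span_induction (hx := hmem) ?_ ?_ ?_ ?_
    · rintro _ ⟨r, hr, rfl⟩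
      rw [key]
      exact (ZMod.intCast_zmod_eq_zero_iff_dvd _ _).2 (hdvd v hv r hr)
    · simp
    · intro a b _ _ ha hb; simp [ha, hb]
    · intro a b _ hb; simp [smul_eq_mul, hb]
  rw [key] at hzero
  have hd : (n : ℤ) ∣ MvPolynomial.eval v e :=
    (ZMod.intCast_zmod_eq_zero_iff_dvd _ _).1 hzero
  have := hrange v hv
  refine Int.eq_zero_of_abs_lt_dvd hd ?_
  rw [abs_lt]; omega
end

section
/- Let k be a natural number, let l, u : Fin k → ℝ satisfy l i ≤ u i and max(|l i|, |u i|) > 0 for all i, and set Mᵢ := max(|l i|, |u i|). Let d, e : Fin k → ℕ be exponent tuples of two monomials m and s, let n be a real number, and define the weight of an exponent tuple a as w(a) := ∑_i (a i) · log Mᵢ. Suppose w(e) ≤ w(d) and suppose that for every x in the box (l i ≤ x i ≤ u i for all i) one has ∏_i |x i|^(d i) ≤ n − 1. Then for every x in the box, ∏_i |x i|^(e i) ≤ n − 1 (monomials smaller in the weighted order inherit the liftable range bound). -/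
/-!
Over the box, `|x^a|` is at most `∏ i, Mᵢ ^ aᵢ`, and this bound is attained at the vertex that
picks in each coordinate the endpoint of larger modulus. The logarithm of `∏ i, Mᵢ ^ aᵢ` is the
weight `w(a)`, so `w(e) ≤ w(d)` compares these maxima, and the hypothesis on `d` at that vertex
bounds every value of the `e`-monomial.
-/

open Finset Real

lemma exists_abs_eq_max_abs_of_le {a b : ℝ} (hab : a ≤ b) :
    ∃ y, a ≤ y ∧ y ≤ b ∧ |y| = max |a| |b| := by
  rcases le_total |a| |b| with h | h
  · exact ⟨b, hab, le_rfl, (max_eq_right h).symm⟩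
  · exact ⟨a, le_rfl, hab, (max_eq_left h).symm⟩

section Box

variable {ι : Type*} [Fintype ι]

lemma prod_abs_pow_le_prod_max_abs_pow {l u x : ι → ℝ} (hx : ∀ i, l i ≤ x i ∧ x i ≤ u i)
    (a : ι → ℕ) : ∏ i, |x i| ^ a i ≤ ∏ i, max |l i| |u i| ^ a i :=
  prod_le_prod (fun i _ => by positivity) fun i _ =>
    pow_le_pow_left₀ (abs_nonneg _) (abs_le_max_abs_abs (hx i).1 (hx i).2) _

lemma exists_mem_box_prod_abs_pow_eq {l u : ι → ℝ} (hlu : ∀ i, l i ≤ u i) (a : ι → ℕ) :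
    ∃ y : ι → ℝ, (∀ i, l i ≤ y i ∧ y i ≤ u i) ∧
      ∏ i, |y i| ^ a i = ∏ i, max |l i| |u i| ^ a i := by
  choose y hly hyu hy using fun i => exists_abs_eq_max_abs_of_le (hlu i)
  exact ⟨y, fun i => ⟨hly i, hyu i⟩, by simp only [hy]⟩

lemma log_prod_pow_eq_sum_mul_log {M : ι → ℝ} (hM : ∀ i, 0 < M i) (a : ι → ℕ) :
    log (∏ i, M i ^ a i) = ∑ i, (a i : ℝ) * log (M i) := by
  rw [log_prod fun i _ => (pow_pos (hM i) _).ne']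
  simp only [log_pow]

lemma prod_pow_le_prod_pow_of_sum_mul_log_le {M : ι → ℝ} (hM : ∀ i, 0 < M i) {d e : ι → ℕ}
    (hw : ∑ i, (e i : ℝ) * log (M i) ≤ ∑ i, (d i : ℝ) * log (M i)) :
    ∏ i, M i ^ e i ≤ ∏ i, M i ^ d i := by
  rwa [← log_le_log_iff (prod_pos fun i _ => pow_pos (hM i) _)
    (prod_pos fun i _ => pow_pos (hM i) _), log_prod_pow_eq_sum_mul_log hM,
    log_prod_pow_eq_sum_mul_log hM]

end Box

/-- Monomials smaller in the weighted order inherit the liftable range bound: with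
`Mᵢ = max |l i| |u i| > 0` and weight `w(a) = ∑ i, a i * log Mᵢ`, if `w(e) ≤ w(d)`
and the monomial with exponents `d` satisfies `∏ i, |x i| ^ (d i) ≤ n − 1` on the
whole box, then so does the monomial with exponents `e`. -/
theorem stmt_11 (k : ℕ) (l u : Fin k → ℝ) (hlu : ∀ i, l i ≤ u i)
    (hpos : ∀ i, 0 < max |l i| |u i|)
    (d e : Fin k → ℕ) (n : ℝ)
    (hw : (∑ i, (e i : ℝ) * Real.log (max |l i| |u i|)) ≤
          (∑ i, (d i : ℝ) * Real.log (max |l i| |u i|)))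
    (hd : ∀ x : Fin k → ℝ, (∀ i, l i ≤ x i ∧ x i ≤ u i) →
      (∏ i, |x i| ^ (d i)) ≤ n - 1) :
    ∀ x : Fin k → ℝ, (∀ i, l i ≤ x i ∧ x i ≤ u i) →
      (∏ i, |x i| ^ (e i)) ≤ n - 1 := by
  intro x hx
  obtain ⟨y, hy, hy_max⟩ := exists_mem_box_prod_abs_pow_eq hlu d
  calc ∏ i, |x i| ^ e i ≤ ∏ i, max |l i| |u i| ^ e i := prod_abs_pow_le_prod_max_abs_pow hx e
    _ ≤ ∏ i, max |l i| |u i| ^ d i := prod_pow_le_prod_pow_of_sum_mul_log_le hpos hw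
    _ = ∏ i, |y i| ^ d i := hy_max.symm
    _ ≤ n - 1 := hd y hy
end

section
/- Let n be a positive integer, let l, t be natural numbers, let c : Fin l → Fin t → ℤ be a matrix of coefficients (c i j is the coefficient of the j-th monomial in the i-th polynomial), and let lo, hi : Fin t → ℤ with lo j ≤ hi j for all j (bounds of the monomial values over the variable box). For a : Fin l → ℤ define coef_j(a) := ∑_i (a i) · (c i j), LB(a) := ∑_j ( (lo j) · relu(coef_j(a)) − (hi j) · relu(−coef_j(a)) ), and UB(a) := ∑_j ( (hi j) · relu(coef_j(a)) − (lo j) · relu(−coef_j(a)) ), where relu(z) = max(z, 0). Then there exists a : Fin l → ℤ with LB(a) > −n, UB(a) < n, and ∑_j (relu(coef_j(a)) + relu(−coef_j(a))) > 0, if and only if there exists a : Fin l → ℤ such that the coefficient vector (coef_j(a))_j is nonzero and for every x : Fin t → ℤ with lo j ≤ x j ≤ hi j for all j, one has 1 − n ≤ ∑_j coef_j(a) · (x j) ≤ n − 1 (the encoding Φ is satisfiable iff some nonzero integer linear combination of the given polynomials has interval bounds strictly inside (−n, n), i.e., is liftable). -/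
/-- Correctness of the encoding `Φ` for finding liftable linear combinations:
with `coef a j = ∑ i, a i * c i j` and `relu z = max z 0`, there exists `a` with
`LB(a) > −n`, `UB(a) < n` and a nonzero ReLU sum of coefficients, iff there exists
`a` whose coefficient vector is nonzero and such that the linear combination
`∑ j, coef a j * x j` lies in `[1 − n, n − 1]` for every `x` in the integer box. -/
theorem stmt_14 (n : ℤ) (hn : 0 < n) (l t : ℕ)
    (c : Fin l → Fin t → ℤ) (lo hi : Fin t → ℤ) (hlohi : ∀ j, lo j ≤ hi j) :
    (∃ a : Fin l → ℤ,
      -n < (∑ j, (lo j * max (∑ i, a i * c i j) 0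
                    - hi j * max (-(∑ i, a i * c i j)) 0)) ∧
      (∑ j, (hi j * max (∑ i, a i * c i j) 0
                    - lo j * max (-(∑ i, a i * c i j)) 0)) < n ∧
      0 < (∑ j, (max (∑ i, a i * c i j) 0 + max (-(∑ i, a i * c i j)) 0)))
    ↔
    (∃ a : Fin l → ℤ,
      (∃ j, (∑ i, a i * c i j) ≠ 0) ∧
      ∀ x : Fin t → ℤ, (∀ j, lo j ≤ x j ∧ x j ≤ hi j) →
        1 - n ≤ (∑ j, (∑ i, a i * c i j) * x j) ∧
        (∑ j, (∑ i, a i * c i j) * x j) ≤ n - 1) := by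
  constructor
  · rintro ⟨a, hLB, hUB, hS⟩
    refine ⟨a, ?_, ?_⟩
    · by_contra h
      push_neg at h
      simp only [h, neg_zero, max_self, add_zero, Finset.sum_const_zero] at hS
      exact lt_irrefl 0 hS
    · intro x hx
      have hterm_lo : ∀ j ∈ Finset.univ,
          lo j * max (∑ i, a i * c i j) 0 - hi j * max (-(∑ i, a i * c i j)) 0
            ≤ (∑ i, a i * c i j) * x j := by
        intro j _
        rcases le_total 0 (∑ i, a i * c i j) with h | h
        · rw [max_eq_left h, max_eq_right (neg_nonpos.mpr h)]
          nlinarith [(hx j).1, (hx j).2]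
        · rw [max_eq_right h, max_eq_left (neg_nonneg.mpr h)]
          nlinarith [(hx j).1, (hx j).2]
      have hterm_hi : ∀ j ∈ Finset.univ,
          (∑ i, a i * c i j) * x j
            ≤ hi j * max (∑ i, a i * c i j) 0 - lo j * max (-(∑ i, a i * c i j)) 0 := by
        intro j _
        rcases le_total 0 (∑ i, a i * c i j) with h | h
        · rw [max_eq_left h, max_eq_right (neg_nonpos.mpr h)]
          nlinarith [(hx j).1, (hx j).2]
        · rw [max_eq_right h, max_eq_left (neg_nonneg.mpr h)]
          nlinarith [(hx j).1, (hx j).2]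
      have h1 := Finset.sum_le_sum hterm_lo
      have h2 := Finset.sum_le_sum hterm_hi
      constructor <;> omega
  · rintro ⟨a, ⟨j0, hj0⟩, hbound⟩
    set xm : Fin t → ℤ := fun j => if 0 ≤ (∑ i, a i * c i j) then lo j else hi j with hxm
    set xp : Fin t → ℤ := fun j => if 0 ≤ (∑ i, a i * c i j) then hi j else lo j with hxp
    have hxmbox : ∀ j, lo j ≤ xm j ∧ xm j ≤ hi j := by
      intro j; simp only [hxm]; split
      · exact ⟨le_refl _, hlohi j⟩
      · exact ⟨hlohi j, le_refl _⟩
    have hxpbox : ∀ j, lo j ≤ xp j ∧ xp j ≤ hi j := by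
      intro j; simp only [hxp]; split
      · exact ⟨hlohi j, le_refl _⟩
      · exact ⟨le_refl _, hlohi j⟩
    have h1 := hbound xm hxmbox
    have h2 := hbound xp hxpbox
    have eLB : (∑ j, (∑ i, a i * c i j) * xm j)
        = ∑ j, (lo j * max (∑ i, a i * c i j) 0 - hi j * max (-(∑ i, a i * c i j)) 0) := by
      apply Finset.sum_congr rfl
      intro j _
      simp only [hxm]
      rcases le_or_gt 0 (∑ i, a i * c i j) with h | h
      · rw [if_pos h, max_eq_left h, max_eq_right (neg_nonpos.mpr h)]; ring
      · rw [if_neg (not_le.mpr h), max_eq_right h.le,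
          max_eq_left (neg_nonneg.mpr h.le)]; ring
    have eUB : (∑ j, (∑ i, a i * c i j) * xp j)
        = ∑ j, (hi j * max (∑ i, a i * c i j) 0 - lo j * max (-(∑ i, a i * c i j)) 0) := by
      apply Finset.sum_congr rfl
      intro j _
      simp only [hxp]
      rcases le_or_gt 0 (∑ i, a i * c i j) with h | h
      · rw [if_pos h, max_eq_left h, max_eq_right (neg_nonpos.mpr h)]; ring
      · rw [if_neg (not_le.mpr h), max_eq_right h.le,
          max_eq_left (neg_nonneg.mpr h.le)]; ring
    rw [eLB] at h1
    rw [eUB] at h2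
    refine ⟨a, by omega, by omega, ?_⟩
    apply Finset.sum_pos'
    · intro j _
      have := le_max_right (∑ i, a i * c i j) 0
      have := le_max_right (-(∑ i, a i * c i j)) 0
      omega
    · refine ⟨j0, Finset.mem_univ _, ?_⟩
      rcases lt_or_gt_of_ne hj0 with h | h
      · have h1 : 0 < max (-(∑ i, a i * c i j0)) 0 := lt_max_of_lt_left (by omega)
        have h2 := le_max_right (∑ i, a i * c i j0) 0
        omega
      · have h1 : 0 < max (∑ i, a i * c i j0) 0 := lt_max_of_lt_left h
        have h2 := le_max_right (-(∑ i, a i * c i j0)) 0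
        omega
end

section
/- Let p and q be integers with p ≥ 2 and q ≥ p². Let x, y, r₁, r₂, r₃, c₁, c₂, c₃ be integers, each satisfying 0 ≤ · ≤ p − 1. Suppose x·y ≡ r₁ + c₁·p (mod q), r₁·y ≡ r₂ + c₂·p (mod q), and x + r₂ ≡ r₃ + c₃·p (mod q). Then x + x·y² ≡ r₃ (mod p). -/
lemma lift_eq {q a b : ℤ} (h : a ≡ b [ZMOD q]) (ha : 0 ≤ a) (ha' : a < q)
    (hb : 0 ≤ b) (hb' : b < q) : a = b := by
  have hd : q ∣ b - a := h.dvd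
  have : b - a = 0 := Int.eq_zero_of_abs_lt_dvd hd (by rw [abs_sub_lt_iff]; omega)
  omega

/-- The motivating multimodular example: for `p ≥ 2` and `q ≥ p²`, if
`x, y, r₁, r₂, r₃, c₁, c₂, c₃` are integers in `[0, p − 1]` satisfying
`x·y ≡ r₁ + c₁·p (mod q)`, `r₁·y ≡ r₂ + c₂·p (mod q)` and
`x + r₂ ≡ r₃ + c₃·p (mod q)`, then `x + x·y² ≡ r₃ (mod p)`. -/
theorem stmt_15 (p q x y r₁ r₂ r₃ c₁ c₂ c₃ : ℤ)
    (hp : 2 ≤ p) (hq : p ^ 2 ≤ q)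
    (hx : 0 ≤ x ∧ x ≤ p - 1) (hy : 0 ≤ y ∧ y ≤ p - 1)
    (hr₁ : 0 ≤ r₁ ∧ r₁ ≤ p - 1) (hr₂ : 0 ≤ r₂ ∧ r₂ ≤ p - 1)
    (hr₃ : 0 ≤ r₃ ∧ r₃ ≤ p - 1)
    (hc₁ : 0 ≤ c₁ ∧ c₁ ≤ p - 1) (hc₂ : 0 ≤ c₂ ∧ c₂ ≤ p - 1)
    (hc₃ : 0 ≤ c₃ ∧ c₃ ≤ p - 1)
    (h1 : x * y ≡ r₁ + c₁ * p [ZMOD q])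
    (h2 : r₁ * y ≡ r₂ + c₂ * p [ZMOD q])
    (h3 : x + r₂ ≡ r₃ + c₃ * p [ZMOD q]) :
    x + x * y ^ 2 ≡ r₃ [ZMOD p] := by
  obtain ⟨hx0, hx1⟩ := hx
  obtain ⟨hy0, hy1⟩ := hy
  obtain ⟨hr₁0, hr₁1⟩ := hr₁
  obtain ⟨hr₂0, hr₂1⟩ := hr₂
  obtain ⟨hr₃0, hr₃1⟩ := hr₃
  obtain ⟨hc₁0, hc₁1⟩ := hc₁
  obtain ⟨hc₂0, hc₂1⟩ := hc₂
  obtain ⟨hc₃0, hc₃1⟩ := hc₃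
  have hp2 : p ^ 2 = p * p := sq p
  have hmul : x * y ≤ (p - 1) * (p - 1) :=
    mul_le_mul hx1 hy1 hy0 (by omega)
  have hmul2 : r₁ * y ≤ (p - 1) * (p - 1) :=
    mul_le_mul hr₁1 hy1 hy0 (by omega)
  have hc₁p : c₁ * p ≤ (p - 1) * p := mul_le_mul_of_nonneg_right hc₁1 (by omega)
  have hc₂p : c₂ * p ≤ (p - 1) * p := mul_le_mul_of_nonneg_right hc₂1 (by omega)
  have hc₃p : c₃ * p ≤ (p - 1) * p := mul_le_mul_of_nonneg_right hc₃1 (by omega)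
  have e1 : x * y = r₁ + c₁ * p := by
    refine lift_eq h1 (mul_nonneg hx0 hy0) (by nlinarith [hmul]) (by positivity)
      (by nlinarith [hc₁p])
  have e2 : r₁ * y = r₂ + c₂ * p := by
    refine lift_eq h2 (mul_nonneg hr₁0 hy0) (by nlinarith [hmul2]) (by positivity)
      (by nlinarith [hc₂p])
  have e3 : x + r₂ = r₃ + c₃ * p := by
    refine lift_eq h3 (by omega) (by nlinarith [hq]) (by positivity)
      (by nlinarith [hc₃p])
  have key : x + x * y ^ 2 - r₃ = (c₃ + c₂ + c₁ * y) * p := by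
    linear_combination y * e1 + e2 + e3
  have : p ∣ x + x * y ^ 2 - r₃ := key ▸ ⟨c₃ + c₂ + c₁ * y, mul_comm _ _⟩
  exact (Int.modEq_iff_dvd.mpr (by omega)).symm
end
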